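/- arXiv:1510.09139 — 3 statements merged into one kernel-verified Lean document; each statement's English description precedes it below -/
import Mathlib

section
/- A topological space (X, τ) is anti-hyperconnected if and only if it is T1 and sober. (Theorem 1.5) -/
universe u

/-- A topological space is hyperconnected iff every pair of non-empty open sets intersect. -/
def Hyperconn (X : Type u) [TopologicalSpace X] : Prop :=
  ∀ U V : Set X, IsOpen U → IsOpen V → U.Nonempty → V.Nonempty → (U ∩ V).Nonempty

/-- `Spec(hyperconnected)`: every topology on `A` is hyperconnected. -/
def SpecHyperconn (A : Type u) : Prop :=
  ∀ τ : TopologicalSpace A, @Hyperconn A τ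

/-- A space is anti-hyperconnected iff every hyperconnected subspace has underlying set in
`Spec(hyperconnected)`. -/
def AntiHyperconn (X : Type u) [TopologicalSpace X] : Prop :=
  ∀ Y : Set X, Hyperconn ↥Y → SpecHyperconn ↥Y

/-- A space is sober iff every non-empty hyperconnected subspace is the closure of a point,
and that point is unique. -/
def PaperSober (X : Type u) [TopologicalSpace X] : Prop :=
  ∀ Y : Set X, Y.Nonempty → Hyperconn ↥Y → ∃! x : X, Y = closure {x}


lemma specHyperconn_iff_subsingleton (A : Type u) : SpecHyperconn A ↔ Subsingleton A := by
  constructor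
  · intro h
    by_contra hs
    rw [not_subsingleton_iff_nontrivial] at hs
    obtain ⟨a, b, hab⟩ := hs
    letI : TopologicalSpace A := ⊥
    haveI : DiscreteTopology A := ⟨rfl⟩
    obtain ⟨c, hc1, hc2⟩ := h _ {a} {b} (isOpen_discrete _) (isOpen_discrete _)
      ⟨a, rfl⟩ ⟨b, rfl⟩
    exact hab (hc1.symm.trans hc2)
  · rintro h τ U V hU hV ⟨u, hu⟩ ⟨v, hv⟩
    exact ⟨u, hu, (Subsingleton.elim v u ▸ hv : u ∈ V)⟩

lemma hyperconn_closure_singleton {X : Type u} [TopologicalSpace X] (x : X) :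
    Hyperconn ↥(closure ({x} : Set X)) := by
  intro U V hU hV hUne hVne
  obtain ⟨u, hu, rfl⟩ := isOpen_induced_iff.mp hU
  obtain ⟨v, hv, rfl⟩ := isOpen_induced_iff.mp hV
  have key : ∀ (w : Set X), IsOpen w →
      ((Subtype.val ⁻¹' w : Set ↥(closure ({x} : Set X)))).Nonempty → x ∈ w := by
    rintro w hw ⟨⟨y, hy⟩, hyw⟩
    obtain ⟨z, hzw, hzx⟩ := mem_closure_iff.mp hy w hw hyw
    rwa [← hzx]
  exact ⟨⟨x, subset_closure rfl⟩, key u hu hUne, key v hv hVne⟩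

/-- Theorem 1.5: a topological space is anti-hyperconnected iff it is T₁ and sober. -/
theorem antiHyperconn_iff_t1_and_sober (X : Type u) [TopologicalSpace X] :
    AntiHyperconn X ↔ (T1Space X ∧ PaperSober X) := by
  constructor
  · intro h
    have key : ∀ x : X, closure ({x} : Set X) = {x} := by
      intro x
      have hsub : Subsingleton ↥(closure ({x} : Set X)) :=
        (specHyperconn_iff_subsingleton _).mp
          (h _ (hyperconn_closure_singleton x))
      apply Set.Subset.antisymm ?_ subset_closure
      intro y hy
      have := Subsingleton.elim (⟨y, hy⟩ : ↥(closure ({x} : Set X)))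
        ⟨x, subset_closure rfl⟩
      simpa using congrArg Subtype.val this
    constructor
    · exact ⟨fun x => key x ▸ isClosed_closure⟩
    · intro Y hYne hY
      have hsub : Subsingleton ↥Y :=
        (specHyperconn_iff_subsingleton _).mp (h _ hY)
      obtain ⟨x, hx⟩ := hYne
      have hYx : Y = {x} := by
        apply Set.Subset.antisymm
        · intro y hy
          have := Subsingleton.elim (⟨y, hy⟩ : ↥Y) ⟨x, hx⟩
          simpa using congrArg Subtype.val this
        · rintro y rfl; exact hx
      refine ⟨x, ?_, ?_⟩
      · rw [hYx]; exact (key x).symm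
      intro y hyY
      rw [key y, hYx] at hyY
      exact (Set.singleton_eq_singleton_iff.mp hyY.symm)
  · rintro ⟨ht1, hsob⟩ Y hY
    rw [specHyperconn_iff_subsingleton]
    rcases Y.eq_empty_or_nonempty with rfl | hne
    · exact ⟨fun a => absurd a.2 (Set.notMem_empty _)⟩
    · obtain ⟨x, hx, -⟩ := hsob Y hne hY
      rw [closure_singleton] at hx
      subst hx
      exact ⟨fun a b => Subtype.ext (a.2.trans b.2.symm)⟩
end

section
/- For any infinite cardinal κ, if C(κ, Pow(κ)) holds, then κ with its discrete topology is κ⁺-Lindelöf: every open cover of the discrete space on κ has a subcover of cardinality at most κ. (Theorem 2.4, direction 3 ⇒ 1) -/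
universe u

/-- A topological space is `κ`-Lindelöf iff every open cover has a subcover of
cardinality strictly less than `κ`. -/
def IsKLindelof (κ : Cardinal.{u}) (X : Type u) [TopologicalSpace X] : Prop :=
  ∀ U : Set (Set X), (∀ u ∈ U, IsOpen u) → ⋃₀ U = Set.univ →
    ∃ V ⊆ U, ⋃₀ V = Set.univ ∧ Cardinal.mk V < κ

/-- `Spec(κ-Lindelöf)`: every topology on `A` is `κ`-Lindelöf. -/
def SpecKLindelof (κ : Cardinal.{u}) (A : Type u) : Prop :=
  ∀ τ : TopologicalSpace A, @IsKLindelof κ A τ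

/-- `(X, τ)` has weight smaller than `κ`: there is a base `B` with `|B| < κ`. -/
def WeightLT (κ : Cardinal.{u}) (X : Type u) [TopologicalSpace X] : Prop :=
  ∃ B : Set (Set X), TopologicalSpace.IsTopologicalBasis B ∧ Cardinal.mk B < κ

/-- The choice principle `C(κ, S)`: for every family of non-empty subsets of `S`
indexed by a set of cardinality at most `κ`, there is a choice function. -/
def ChoicePrinciple (κ : Cardinal.{u}) (S : Type u) : Prop :=
  ∀ (A : Type u) (N : A → Set S), Cardinal.mk A ≤ κ → (∀ t, (N t).Nonempty) →
    ∃ f : A → S, ∀ t, f t ∈ N t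

/-- Theorem 2.4, direction (3) ⇒ (1): for an infinite cardinal `κ`, if `C(κ, Pow(κ))` holds,
then `κ` with its discrete topology is `κ⁺`-Lindelöf, i.e. every open cover of the discrete
space on `κ` has a subcover of cardinality at most `κ`. -/
theorem discrete_kLindelof_of_choice (κ : Cardinal.{u}) (hκ : Cardinal.aleph0 ≤ κ)
    (hC : ChoicePrinciple κ (Set κ.out)) :
    @IsKLindelof (Order.succ κ) κ.out ⊥ := by
  intro U _ hcov
  have hmk : Cardinal.mk κ.out ≤ κ := le_of_eq (Cardinal.mk_out κ)
  obtain ⟨f, hf⟩ := hC κ.out (fun x => {u | u ∈ U ∧ x ∈ u}) hmk (fun x => by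
    have : (x : κ.out) ∈ ⋃₀ U := hcov ▸ Set.mem_univ x
    obtain ⟨u, hu, hxu⟩ := this
    exact ⟨u, hu, hxu⟩)
  refine ⟨Set.range f, ?_, ?_, ?_⟩
  · rintro u ⟨x, rfl⟩; exact (hf x).1
  · ext x; simp only [Set.mem_univ, iff_true]
    exact ⟨f x, ⟨x, rfl⟩, (hf x).2⟩
  · exact lt_of_le_of_lt (Cardinal.mk_range_le.trans hmk) (Order.lt_succ κ)
end

section
/- Assume CC(Pow(ℵ₀)). Then Spec(Lindelöf) is formed by the countable sets: a set A satisfies that every topology on A is Lindelöf if and only if A is countable. (Corollary 2.7, second part) -/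
universe u

/-- A topological space is Lindelöf (i.e. `ℵ₁`-Lindelöf) iff every open cover has a
countable subcover. -/
def IsLindelofSp (X : Type u) [TopologicalSpace X] : Prop :=
  ∀ U : Set (Set X), (∀ u ∈ U, IsOpen u) → ⋃₀ U = Set.univ →
    ∃ V ⊆ U, ⋃₀ V = Set.univ ∧ V.Countable

/-- Corollary 2.7, second part: assuming `CC(Pow(ℵ₀))`, `Spec(Lindelöf)` is formed by the
countable sets: every topology on `A` is Lindelöf iff `A` is countable. -/
theorem specLindelof_iff_countable
    (hCC : ∀ (A : Type u) (N : A → Set (Set ℕ)), Cardinal.mk A ≤ Cardinal.aleph0 →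
      (∀ t, (N t).Nonempty) → ∃ f : A → Set ℕ, ∀ t, f t ∈ N t)
    (A : Type u) :
    (∀ τ : TopologicalSpace A, @IsLindelofSp A τ) ↔ Countable A := by
  constructor
  · intro h
    -- use the discrete topology
    have hd := h ⊥
    obtain ⟨V, hVU, hVcov, hVc⟩ := hd (Set.range fun a : A => ({a} : Set A))
      (fun u _ => trivial) (by
        ext a
        simp only [Set.mem_sUnion, Set.mem_univ, iff_true]
        exact ⟨{a}, ⟨a, rfl⟩, rfl⟩)
    -- every `{a}` lies in `V`
    have key : ∀ a : A, ({a} : Set A) ∈ V := by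
      intro a
      have : a ∈ ⋃₀ V := hVcov ▸ Set.mem_univ a
      obtain ⟨s, hsV, has⟩ := this
      obtain ⟨b, rfl⟩ := hVU hsV
      rcases has with rfl
      exact hsV
    have : Function.Injective (fun a : A => (⟨{a}, key a⟩ : V)) := by
      intro a b hab
      have : ({a} : Set A) = {b} := congrArg Subtype.val hab
      simpa using this
    have : Countable V := hVc.to_subtype
    exact Countable.of_equiv _ (Equiv.ofInjective _ ‹Function.Injective _›).symm
  · intro hA τ U hopen hcov
    have hmem : ∀ a : A, ∃ s ∈ U, a ∈ s := by
      intro a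
      have : a ∈ ⋃₀ U := hcov ▸ Set.mem_univ a
      exact this
    choose f hfU hfa using hmem
    refine ⟨Set.range f, ?_, ?_, Set.countable_range f⟩
    · rintro s ⟨a, rfl⟩; exact hfU a
    · ext a
      simp only [Set.mem_sUnion, Set.mem_univ, iff_true]
      exact ⟨f a, ⟨a, rfl⟩, hfa a⟩
end
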